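/- arXiv:2505.00258 — 6 statements merged into one kernel-verified Lean document; each statement's English description precedes it below -/
import Mathlib

section
/- Let 0 < q < 1 − β with qm and βm integers. Suppose x* ∈ ℝⁿ satisfies A x* = b_t and b = b_t + ξ where ‖ξ‖₀ ≤ βm. Then for any x_k ∈ ℝⁿ, the q-quantile Q of the residual magnitudes satisfies Q ≤ σ_max(A)·‖x_k − x*‖ / (√m · √(1 − q − β)). -/
open Finset

/-- Largest singular value of `A`, as the operator norm of the associated
Euclidean linear map. -/
noncomputable def sigmaMax {m n : ℕ} (A : Matrix (Fin m) (Fin n) ℝ) : ℝ :=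
  ‖LinearMap.toContinuousLinearMap (Matrix.toEuclideanLin A)‖

/-- `sigmaSMin A k` is the minimum over all index sets `I` of cardinality `k`
of the smallest value of `‖A_I x‖` over unit vectors `x`. -/
noncomputable def sigmaSMin {m n : ℕ} (A : Matrix (Fin m) (Fin n) ℝ) (k : ℕ) : ℝ :=
  sInf {t : ℝ | ∃ I : Finset (Fin m), I.card = k ∧
    t = sInf {u : ℝ | ∃ x : EuclideanSpace ℝ (Fin n), ‖x‖ = 1 ∧
      u = Real.sqrt (∑ i ∈ I, (A.mulVec (fun k => x k) i) ^ 2)}}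

/-- The `j`-th row of `A`, as a vector in Euclidean space. -/
noncomputable def row {m n : ℕ} (A : Matrix (Fin m) (Fin n) ℝ) (j : Fin m) :
    EuclideanSpace ℝ (Fin n) := WithLp.toLp 2 (fun k => A j k)

/-- Residual `r_j = b_j - ⟨x, a_j⟩`. -/
noncomputable def resid {m n : ℕ} (A : Matrix (Fin m) (Fin n) ℝ) (b : Fin m → ℝ)
    (x : EuclideanSpace ℝ (Fin n)) (j : Fin m) : ℝ :=
  b j - ∑ k, x k * A j k

/-- `IsQuantile f k Q` says `Q` is the `k`-th smallest value (1-indexed,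
counted with multiplicity) of the multiset `{f j}`. -/
def IsQuantile {m : ℕ} (f : Fin m → ℝ) (k : ℕ) (Q : ℝ) : Prop :=
  k ≤ (Finset.univ.filter fun j => f j ≤ Q).card ∧
  (Finset.univ.filter fun j => f j < Q).card < k

/-! At least `m - qm + 1` residuals have magnitude `≥ Q`, and at most `βm` rows of `b` are
corrupted. On an uncorrupted row the residual is `-(A (x_k - x*))_j`, so more than
`(1 - q - β) m` entries of `A (x_k - x*)` have magnitude at least `Q`, whence
`(1 - q - β) m Q² ≤ ‖A (x_k - x*)‖² ≤ σ_max(A)² ‖x_k - x*‖²`. -/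

lemma norm_toEuclideanLin_le_sigmaMax_mul_norm {m n : ℕ} (A : Matrix (Fin m) (Fin n) ℝ)
    (x : EuclideanSpace ℝ (Fin n)) : ‖Matrix.toEuclideanLin A x‖ ≤ sigmaMax A * ‖x‖ :=
  (LinearMap.toContinuousLinearMap (Matrix.toEuclideanLin A)).le_opNorm x

lemma resid_eq_sub_toEuclideanLin {m n : ℕ} (A : Matrix (Fin m) (Fin n) ℝ)
    (xstar x : EuclideanSpace ℝ (Fin n)) (ξ : Fin m → ℝ) (j : Fin m) :
    resid A (A.mulVec (fun k => xstar k) + ξ) x j =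
      ξ j - Matrix.toEuclideanLin A (x - xstar) j := by
  simp only [resid, Pi.add_apply, Matrix.mulVec, dotProduct, Matrix.toLpLin_apply,
    PiLp.sub_apply, mul_sub, Finset.sum_sub_distrib, mul_comm (x _)]
  ring

namespace IsQuantile

variable {m : ℕ} {f : Fin m → ℝ} {k : ℕ} {Q : ℝ}

lemma pos (hQ : IsQuantile f k Q) : 0 < k :=
  Nat.zero_lt_of_lt hQ.2

lemma nonneg (hf : ∀ j, 0 ≤ f j) (hQ : IsQuantile f k Q) : 0 ≤ Q := by
  obtain ⟨j, hj⟩ := Finset.card_pos.mp (hQ.pos.trans_le hQ.1)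
  exact (hf j).trans (Finset.mem_filter.mp hj).2

lemma lt_add_card_filter_le (hQ : IsQuantile f k Q) :
    m < k + #{j | Q ≤ f j} := by
  have hsplit := Finset.card_filter_add_card_filter_not (s := Finset.univ) (fun j => f j < Q)
  simp only [not_lt, Finset.card_univ, Fintype.card_fin] at hsplit
  have := hQ.2
  omega

end IsQuantile

lemma card_mul_sq_le_norm_sq {m : ℕ} (v : EuclideanSpace ℝ (Fin m)) (S : Finset (Fin m))
    {c : ℝ} (hc : 0 ≤ c) (hS : ∀ j ∈ S, c ≤ |v j|) : #S * c ^ 2 ≤ ‖v‖ ^ 2 := by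
  rw [EuclideanSpace.real_norm_sq_eq]
  calc (#S : ℝ) * c ^ 2 = ∑ _j ∈ S, c ^ 2 := by rw [Finset.sum_const, nsmul_eq_mul]
    _ ≤ ∑ j ∈ S, v j ^ 2 := Finset.sum_le_sum fun j hj => by
        simpa only [sq_abs] using pow_le_pow_left₀ hc (hS j hj) 2
    _ ≤ ∑ j, v j ^ 2 := Finset.sum_le_sum_of_subset_of_nonneg (Finset.subset_univ _)
        fun j _ _ => sq_nonneg _

lemma sparse_quantile_sq_mul_le_norm_sq {m k s : ℕ} {Q : ℝ} {v : EuclideanSpace ℝ (Fin m)}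
    {ξ : Fin m → ℝ} (hξ : #{j | ξ j ≠ 0} ≤ s)
    (hQ : IsQuantile (fun j => |ξ j - v j|) k Q) :
    ((m : ℝ) + 1 - k - s) * Q ^ 2 ≤ ‖v‖ ^ 2 := by
  set S : Finset (Fin m) := {j | Q ≤ |ξ j - v j| ∧ ξ j = 0}
  have hcover : ({j | Q ≤ |ξ j - v j|} : Finset (Fin m)) ⊆
      S ∪ ({j | ξ j ≠ 0} : Finset (Fin m)) := by
    intro j
    simp only [Finset.mem_filter, Finset.mem_univ, true_and, Finset.mem_union, S]
    tauto
  have hcard : m + 1 ≤ k + #S + s := by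
    have := (Finset.card_le_card hcover).trans (Finset.card_union_le _ _)
    have := hQ.lt_add_card_filter_le
    omega
  have hS : ∀ j ∈ S, Q ≤ |v j| := fun j hj => by
    obtain ⟨hQj, hξj⟩ := (Finset.mem_filter.mp hj).2
    simpa only [hξj, zero_sub, abs_neg] using hQj
  calc ((m : ℝ) + 1 - k - s) * Q ^ 2 ≤ #S * Q ^ 2 := by
        gcongr
        have : ((m + 1 : ℕ) : ℝ) ≤ ((k + #S + s : ℕ) : ℝ) := by exact_mod_cast hcard
        push_cast at this
        linarith
    _ ≤ ‖v‖ ^ 2 := card_mul_sq_le_norm_sq v S (hQ.nonneg fun _ => abs_nonneg _) hS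

lemma le_div_sqrt_of_sq_mul_le {Q R c : ℝ} (hR : 0 ≤ R) (hc : 0 < c) (h : Q ^ 2 * c ≤ R ^ 2) :
    Q ≤ R / Real.sqrt c := by
  rw [le_div_iff₀ (Real.sqrt_pos.mpr hc)]
  refine le_of_sq_le_sq ?_ hR
  rwa [mul_pow, Real.sq_sqrt hc.le]

theorem qrk_quantile_bound_general
    {m n : ℕ} (A : Matrix (Fin m) (Fin n) ℝ)
    (q β : ℝ) (kq kβ : ℕ)
    (hq1 : q < 1 - β)
    (hkq : (kq : ℝ) = q * m) (hkβ : (kβ : ℝ) = β * m)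
    (xstar : EuclideanSpace ℝ (Fin n)) (bt b ξ : Fin m → ℝ)
    (hsol : A.mulVec (fun k => xstar k) = bt)
    (hb : b = bt + ξ)
    (hsparse : (Finset.univ.filter fun j => ξ j ≠ 0).card ≤ kβ)
    (xk : EuclideanSpace ℝ (Fin n)) (Q : ℝ)
    (hQ : IsQuantile (fun j => |resid A b xk j|) kq Q) :
    Q ≤ sigmaMax A * ‖xk - xstar‖ / (Real.sqrt m * Real.sqrt (1 - q - β)) := by
  subst hb hsol
  set v := Matrix.toEuclideanLin A (xk - xstar)
  simp only [resid_eq_sub_toEuclideanLin] at hQ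
  have hm : 0 < m := Nat.pos_of_ne_zero fun h => by
    simp only [h, CharP.cast_eq_zero, mul_zero, Nat.cast_eq_zero] at hkq
    exact hQ.pos.ne' hkq
  have hc : 0 < (m : ℝ) * (1 - q - β) := mul_pos (by exact_mod_cast hm) (by linarith)
  have key : Q ^ 2 * (m * (1 - q - β)) ≤ (sigmaMax A * ‖xk - xstar‖) ^ 2 :=
    calc Q ^ 2 * (m * (1 - q - β)) ≤ ((m : ℝ) + 1 - kq - kβ) * Q ^ 2 := by
          rw [hkq, hkβ]; linear_combination sq_nonneg Q
      _ ≤ ‖v‖ ^ 2 := sparse_quantile_sq_mul_le_norm_sq hsparse hQ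
      _ ≤ (sigmaMax A * ‖xk - xstar‖) ^ 2 :=
          pow_le_pow_left₀ (norm_nonneg _) (norm_toEuclideanLin_le_sigmaMax_mul_norm A _) 2
  rw [← Real.sqrt_mul (Nat.cast_nonneg m)]
  exact le_div_sqrt_of_sq_mul_le (mul_nonneg (norm_nonneg _) (norm_nonneg _)) hc key

theorem qrk_quantile_bound
    {m n : ℕ} (A : Matrix (Fin m) (Fin n) ℝ)
    (q β : ℝ) (kq kβ : ℕ)
    (hm : 0 < m) (hmn : n ≤ m) (hrank : A.rank = n)
    (hrow : ∀ j, ∑ k, (A j k) ^ 2 = 1)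
    (hq0 : 0 < q) (hq1 : q < 1 - β)
    (hkq : (kq : ℝ) = q * m) (hkβ : (kβ : ℝ) = β * m)
    (xstar : EuclideanSpace ℝ (Fin n)) (bt b ξ : Fin m → ℝ)
    (hsol : A.mulVec (fun k => xstar k) = bt)
    (hb : b = bt + ξ)
    (hsparse : (Finset.univ.filter fun j => ξ j ≠ 0).card ≤ kβ)
    (xk : EuclideanSpace ℝ (Fin n)) (Q : ℝ)
    (hQ : IsQuantile (fun j => |resid A b xk j|) kq Q) :
    Q ≤ sigmaMax A * ‖xk - xstar‖ / (Real.sqrt m * Real.sqrt (1 - q - β)) :=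
  qrk_quantile_bound_general A q β kq kβ hq1 hkq hkβ xstar bt b ξ hsol hb hsparse xk Q hQ
end

section
/- Let 0 < q < 1 − β with qm and βm integers. Suppose A x* = b_t and b = b_t + ξ with ‖ξ‖₀ ≤ βm. For any x_k ∈ ℝⁿ, if the set S := {j ∈ supp(ξ) : |r_j| ≤ Q} is nonempty, then the average (1/|S|) Σ_{i∈S} ‖(x_k + r_i a_i) − x*‖² is at most 2·(1 + σ_max(A)²/(m(1 − q − β)))·‖x_k − x*‖². -/
open Finset

/-!
Each row `a_i` has unit norm, so for `i ∈ S` the projected point lies within `‖x_k - x*‖ + |r_i|`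
of `x*`, with `|r_i| ≤ Q`. It remains to bound `Q`. Fewer than `qm` residuals are below `Q` and at
most `βm` rows are corrupted, so at least `m(1 - q - β)` uncorrupted rows have `|r_j| ≥ Q`. On an
uncorrupted row `r_j = (A(x* - x_k))_j`, hence `m(1 - q - β) Q² ≤ ‖A(x* - x_k)‖² ≤ σ_max² ‖x_k - x*‖²`.
-/

open scoped Matrix

theorem card_le_card_filter_and_le_add {ι α : Type*} [Fintype ι] [DecidableEq ι] [LinearOrder α]
    (p : ι → Prop) [DecidablePred p] (f : ι → α) (Q : α) :
    Fintype.card ι ≤ #{j | p j ∧ Q ≤ f j} + #{j | f j < Q} + #{j | ¬ p j} := by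
  let U : Finset ι := {j | p j ∧ Q ≤ f j}
  let L : Finset ι := {j | f j < Q}
  let C : Finset ι := {j | ¬ p j}
  have hcover : univ ⊆ U ∪ L ∪ C := by
    intro j _
    by_cases hp : p j <;> by_cases hQ : Q ≤ f j <;> simp [U, L, C, hp, hQ, not_le.mp]
  calc Fintype.card ι = #(univ : Finset ι) := card_univ.symm
    _ ≤ #(U ∪ L ∪ C) := card_le_card hcover
    _ ≤ #U + #L + #C := (card_union_le _ _).trans (by gcongr; exact card_union_le _ _)

theorem card_filter_le_abs_mul_sq_le_sum_sq {ι : Type*} (s : Finset ι) (g : ι → ℝ) {Q : ℝ}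
    (hQ : 0 ≤ Q) : #{j ∈ s | Q ≤ |g j|} * Q ^ 2 ≤ ∑ j ∈ s, g j ^ 2 := by
  calc #{j ∈ s | Q ≤ |g j|} * Q ^ 2 ≤ ∑ j ∈ s with Q ≤ |g j|, g j ^ 2 := by
        rw [← nsmul_eq_mul]
        refine card_nsmul_le_sum _ _ _ fun j hj => ?_
        rw [← sq_abs (g j)]
        exact pow_le_pow_left₀ hQ (mem_filter.mp hj).2 2
    _ ≤ ∑ j ∈ s, g j ^ 2 :=
        sum_le_sum_of_subset_of_nonneg (filter_subset _ _) fun j _ _ => sq_nonneg (g j)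

theorem norm_add_smul_sub_sq_le {E : Type*} [SeminormedAddCommGroup E] [NormedSpace ℝ E]
    {u : E} (hu : ‖u‖ = 1) (x y : E) {r Q : ℝ} (hr : |r| ≤ Q) :
    ‖x + r • u - y‖ ^ 2 ≤ 2 * (‖x - y‖ ^ 2 + Q ^ 2) := by
  have hdist : ‖x + r • u - y‖ ≤ ‖x - y‖ + Q :=
    calc ‖x + r • u - y‖ = ‖(x - y) + r • u‖ := by rw [add_sub_right_comm]
      _ ≤ ‖x - y‖ + ‖r • u‖ := norm_add_le _ _
      _ ≤ ‖x - y‖ + Q := by rw [norm_smul, hu, mul_one, Real.norm_eq_abs]; gcongr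
  exact (pow_le_pow_left₀ (norm_nonneg _) hdist 2).trans add_sq_le

section Rows

variable {m n : ℕ} (A : Matrix (Fin m) (Fin n) ℝ)

theorem norm_row_sq (j : Fin m) : ‖row A j‖ ^ 2 = ∑ k, A j k ^ 2 := by
  simp [EuclideanSpace.norm_sq_eq, row]

theorem sum_mulVec_sq_le_sigmaMax_sq_mul (v : EuclideanSpace ℝ (Fin n)) :
    ∑ j, (A *ᵥ ⇑v) j ^ 2 ≤ sigmaMax A ^ 2 * ‖v‖ ^ 2 := by
  have hnorm : ‖Matrix.toEuclideanLin A v‖ ^ 2 = ∑ j, (A *ᵥ ⇑v) j ^ 2 := by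
    simp [EuclideanSpace.norm_sq_eq, Matrix.toLpLin_apply]
  rw [← hnorm, ← mul_pow]
  exact pow_le_pow_left₀ (norm_nonneg _)
    ((LinearMap.toContinuousLinearMap (Matrix.toEuclideanLin A)).le_opNorm v) 2

theorem resid_mulVec_add (xstar x : EuclideanSpace ℝ (Fin n)) (ξ : Fin m → ℝ) (j : Fin m) :
    resid A (A *ᵥ ⇑xstar + ξ) x j = (A *ᵥ ⇑(xstar - x)) j + ξ j := by
  simp only [resid, Pi.add_apply, Matrix.mulVec, dotProduct, WithLp.ofLp_sub, Pi.sub_apply,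
    mul_sub, sum_sub_distrib, mul_comm (x _)]
  ring

theorem sq_quantile_mul_le (b ξ : Fin m → ℝ) (xstar xk : EuclideanSpace ℝ (Fin n))
    (kq kβ : ℕ) {Q : ℝ} (hb : b = A *ᵥ ⇑xstar + ξ) (hsparse : #{j | ξ j ≠ 0} ≤ kβ)
    (hQ : IsQuantile (fun j => |resid A b xk j|) kq Q) (hQ0 : 0 ≤ Q) :
    Q ^ 2 * ((m : ℝ) - kq - kβ) ≤ sigmaMax A ^ 2 * ‖xk - xstar‖ ^ 2 := by
  have hcount : (m : ℝ) - kq - kβ ≤ #{j | ξ j = 0 ∧ Q ≤ |resid A b xk j|} := by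
    have hcover := card_le_card_filter_and_le_add (fun j => ξ j = 0)
      (fun j => |resid A b xk j|) Q
    have hbelow : #{j | |resid A b xk j| < Q} < kq := hQ.2
    have hcorrupt : #{j | ¬ ξ j = 0} ≤ kβ := hsparse
    rw [Fintype.card_fin] at hcover
    exact_mod_cast (by omega : (m : ℤ) - kq - kβ ≤ #{j | ξ j = 0 ∧ Q ≤ |resid A b xk j|})
  set U : Finset (Fin m) := {j | ξ j = 0 ∧ Q ≤ |resid A b xk j|}
  have hclean : U ⊆ ({j | Q ≤ |(A *ᵥ ⇑(xstar - xk)) j|} : Finset (Fin m)) := by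
    intro j hj
    simp only [U, mem_filter, mem_univ, true_and] at hj ⊢
    rw [hb, resid_mulVec_add, hj.1, add_zero] at hj
    exact hj.2
  calc Q ^ 2 * ((m : ℝ) - kq - kβ) ≤ #U * Q ^ 2 := by
        rw [mul_comm]; exact mul_le_mul_of_nonneg_right hcount (sq_nonneg Q)
    _ ≤ #{j | Q ≤ |(A *ᵥ ⇑(xstar - xk)) j|} * Q ^ 2 := by gcongr
    _ ≤ ∑ j, (A *ᵥ ⇑(xstar - xk)) j ^ 2 := card_filter_le_abs_mul_sq_le_sum_sq _ _ hQ0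
    _ ≤ sigmaMax A ^ 2 * ‖xk - xstar‖ ^ 2 := by
        rw [norm_sub_rev]; exact sum_mulVec_sq_le_sigmaMax_sq_mul A _

end Rows

theorem qrk_corrupt_rows_bound_general
    {m n : ℕ} (A : Matrix (Fin m) (Fin n) ℝ)
    (q β : ℝ) (kq kβ : ℕ)
    (hrow : ∀ j, ∑ k, (A j k) ^ 2 = 1)
    (hq1 : q < 1 - β)
    (hkq : (kq : ℝ) = q * m) (hkβ : (kβ : ℝ) = β * m)
    (xstar : EuclideanSpace ℝ (Fin n)) (bt b ξ : Fin m → ℝ)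
    (hsol : A.mulVec (fun k => xstar k) = bt)
    (hb : b = bt + ξ)
    (hsparse : (Finset.univ.filter fun j => ξ j ≠ 0).card ≤ kβ)
    (xk : EuclideanSpace ℝ (Fin n)) (Q : ℝ)
    (hQ : IsQuantile (fun j => |resid A b xk j|) kq Q)
    (S : Finset (Fin m))
    (hS : S = Finset.univ.filter fun j => ξ j ≠ 0 ∧ |resid A b xk j| ≤ Q)
    (hSne : S.Nonempty) :
    (1 / (S.card : ℝ)) * ∑ i ∈ S, ‖(xk + resid A b xk i • row A i) - xstar‖ ^ 2 ≤
      2 * (1 + sigmaMax A ^ 2 / (m * (1 - q - β))) * ‖xk - xstar‖ ^ 2 := by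
  have hresid : ∀ i ∈ S, |resid A b xk i| ≤ Q := fun i hi => by
    rw [hS, mem_filter] at hi; exact hi.2.2
  obtain ⟨i₀, hi₀⟩ := hSne
  have hm : (0 : ℝ) < m * (1 - q - β) :=
    mul_pos (Nat.cast_pos.mpr (Fin.pos i₀)) (by linarith)
  have hQsq : Q ^ 2 ≤ sigmaMax A ^ 2 / (m * (1 - q - β)) * ‖xk - xstar‖ ^ 2 := by
    rw [div_mul_eq_mul_div, le_div_iff₀ hm]
    calc Q ^ 2 * (m * (1 - q - β)) = Q ^ 2 * ((m : ℝ) - kq - kβ) := by rw [hkq, hkβ]; ring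
      _ ≤ _ := sq_quantile_mul_le A b ξ xstar xk kq kβ (by rw [hb, ← hsol]) hsparse hQ
        ((abs_nonneg _).trans (hresid i₀ hi₀))
  have hstep : ∀ i ∈ S, ‖xk + resid A b xk i • row A i - xstar‖ ^ 2 ≤
      2 * (‖xk - xstar‖ ^ 2 + Q ^ 2) := fun i hi =>
    norm_add_smul_sub_sq_le ((pow_eq_one_iff_of_nonneg (norm_nonneg _) two_ne_zero).mp
      ((norm_row_sq A i).trans (hrow i))) _ _ (hresid i hi)
  rw [one_div_mul_eq_div, ← expect_eq_sum_div_card]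
  refine (expect_le ⟨i₀, hi₀⟩ hstep).trans ?_
  linarith

theorem qrk_corrupt_rows_bound
    {m n : ℕ} (A : Matrix (Fin m) (Fin n) ℝ)
    (q β : ℝ) (kq kβ : ℕ)
    (hm : 0 < m) (hmn : n ≤ m) (hrank : A.rank = n)
    (hrow : ∀ j, ∑ k, (A j k) ^ 2 = 1)
    (hq0 : 0 < q) (hq1 : q < 1 - β)
    (hkq : (kq : ℝ) = q * m) (hkβ : (kβ : ℝ) = β * m)
    (xstar : EuclideanSpace ℝ (Fin n)) (bt b ξ : Fin m → ℝ)
    (hsol : A.mulVec (fun k => xstar k) = bt)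
    (hb : b = bt + ξ)
    (hsparse : (Finset.univ.filter fun j => ξ j ≠ 0).card ≤ kβ)
    (xk : EuclideanSpace ℝ (Fin n)) (Q : ℝ)
    (hQ : IsQuantile (fun j => |resid A b xk j|) kq Q)
    (S : Finset (Fin m))
    (hS : S = Finset.univ.filter fun j => ξ j ≠ 0 ∧ |resid A b xk j| ≤ Q)
    (hSne : S.Nonempty) :
    (1 / (S.card : ℝ)) * ∑ i ∈ S, ‖(xk + resid A b xk i • row A i) - xstar‖ ^ 2 ≤
      2 * (1 + sigmaMax A ^ 2 / (m * (1 - q - β))) * ‖xk - xstar‖ ^ 2 :=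
  qrk_corrupt_rows_bound_general A q β kq kβ hrow hq1 hkq hkβ xstar bt b ξ hsol hb hsparse xk Q hQ S
    hS hSne
end

section
/- Let β < q < 1 − β with qm and βm integers. Suppose A x* = b_t and b = b_t + ξ with ‖ξ‖₀ ≤ βm. For any x_k ∈ ℝⁿ, let B be a set of exactly qm indices such that |r_j| ≤ Q for every j ∈ B, and set S := B ∩ supp(ξ). Then B \ S is nonempty and (1/|B\S|) Σ_{i∈B\S} ‖(x_k + r_i a_i) − x*‖² ≤ (1 − σ_{q−β,min}(A)²/(qm))·‖x_k − x*‖². -/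
open Finset

/-!
On a row `i` that the sparse noise `ξ` does not touch, the residual at `x_k` equals
`⟨x* - x_k, a_i⟩`, so the Kaczmarz step `x_k + r_i a_i` is the orthogonal projection of `x_k`
onto the hyperplane `⟨x, a_i⟩ = b_i` through `x*`, and Pythagoras gives
`‖x_k + r_i a_i - x*‖² = ‖x_k - x*‖² - r_i²`. At most `βm` of the `qm` rows of `B` are
corrupted, so at least `(q - β)m` clean rows remain; by the definition of `σ_{q-β,min}` their
squared residuals sum to at least `σ² ‖x_k - x*‖²`, and averaging over at most `qm` rows
gives the contraction factor.
-/

open scoped InnerProductSpace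

theorem norm_add_inner_smul_sub_sq {E : Type*} [NormedAddCommGroup E] [InnerProductSpace ℝ E]
    (x y a : E) (ha : ‖a‖ = 1) :
    ‖x + ⟪y - x, a⟫_ℝ • a - y‖ ^ 2 = ‖x - y‖ ^ 2 - ⟪y - x, a⟫_ℝ ^ 2 := by
  have hxy : ⟪x - y, a⟫_ℝ = -⟪y - x, a⟫_ℝ := by rw [← inner_neg_left, neg_sub]
  rw [add_sub_right_comm, norm_add_sq_real, real_inner_smul_right, norm_smul, hxy, ha,
    Real.norm_eq_abs, mul_one, sq_abs]
  ring

theorem one_div_card_mul_sum_sub_le {ι : Type*} {T : Finset ι} (hT : T.Nonempty)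
    {N : ℝ} (hN : (T.card : ℝ) ≤ N) {D s : ℝ} (hs : 0 ≤ s) (g : ι → ℝ)
    (hg : s ≤ ∑ i ∈ T, g i) :
    1 / T.card * ∑ i ∈ T, (D - g i) ≤ D - s / N := by
  have hc : (0 : ℝ) < T.card := by exact_mod_cast hT.card_pos
  have hsN : s / N ≤ (∑ i ∈ T, g i) / T.card := div_le_div₀ (hs.trans hg) hg hc hN
  rw [sum_sub_distrib, sum_const, nsmul_eq_mul, mul_sub, ← mul_assoc, one_div,
    inv_mul_cancel₀ hc.ne', one_mul, ← div_eq_inv_mul]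
  linarith

theorem card_sub_card_filter_le_card_sdiff_filter {ι : Type*} [Fintype ι] [DecidableEq ι]
    (B : Finset ι) (p : ι → Prop) [DecidablePred p] :
    B.card - (univ.filter p).card ≤ (B \ B.filter p).card := by
  rw [card_sdiff_of_subset (filter_subset p B)]
  exact Nat.sub_le_sub_left (card_le_card (filter_subset_filter p (subset_univ B))) _

section Matrix

variable {m n : ℕ} (A : Matrix (Fin m) (Fin n) ℝ)

theorem norm_row_eq_one {j : Fin m} (h : ∑ k, A j k ^ 2 = 1) : ‖row A j‖ = 1 := by
  rw [← pow_left_inj₀ (norm_nonneg _) zero_le_one two_ne_zero, one_pow, ← h]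
  simp [EuclideanSpace.real_norm_sq_eq, row]

theorem mulVec_apply_eq_inner_row (v : EuclideanSpace ℝ (Fin n)) (j : Fin m) :
    A.mulVec (fun k => v k) j = ⟪v, row A j⟫_ℝ := by
  simp [Matrix.mulVec, dotProduct, PiLp.inner_apply, row]

theorem resid_eq_inner_of_eq_mulVec {b : Fin m → ℝ} {xstar : EuclideanSpace ℝ (Fin n)}
    {j : Fin m} (hj : b j = A.mulVec (fun k => xstar k) j) (x : EuclideanSpace ℝ (Fin n)) :
    resid A b x j = ⟪xstar - x, row A j⟫_ℝ := by
  rw [inner_sub_left, ← mulVec_apply_eq_inner_row, ← hj, ← mulVec_apply_eq_inner_row]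
  simp [resid, Matrix.mulVec, dotProduct, mul_comm]

theorem sigmaSMin_nonneg (k : ℕ) : 0 ≤ sigmaSMin A k := by
  refine Real.sInf_nonneg ?_
  rintro t ⟨I, -, rfl⟩
  refine Real.sInf_nonneg ?_
  rintro u ⟨x, -, rfl⟩
  exact Real.sqrt_nonneg _

theorem sigmaSMin_le_of_norm_eq_one {I : Finset (Fin m)} {x : EuclideanSpace ℝ (Fin n)}
    (hx : ‖x‖ = 1) : sigmaSMin A I.card ≤ √(∑ i ∈ I, ⟪x, row A i⟫_ℝ ^ 2) := by
  rw [sigmaSMin]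
  calc _ ≤ sInf {u : ℝ | ∃ y : EuclideanSpace ℝ (Fin n), ‖y‖ = 1 ∧
          u = √(∑ i ∈ I, (A.mulVec (fun k => y k) i) ^ 2)} := by
        refine csInf_le ⟨0, ?_⟩ ⟨I, rfl, rfl⟩
        rintro t ⟨J, -, rfl⟩
        exact Real.sInf_nonneg fun u ⟨y, hu⟩ => hu.2 ▸ Real.sqrt_nonneg _
    _ ≤ _ := by
        refine csInf_le ⟨0, ?_⟩ ⟨x, hx, ?_⟩
        · rintro u ⟨y, -, rfl⟩
          exact Real.sqrt_nonneg _
        · simp only [mulVec_apply_eq_inner_row]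

theorem sigmaSMin_sq_mul_norm_sq_le {k : ℕ} {J : Finset (Fin m)} (hk : k ≤ J.card)
    (v : EuclideanSpace ℝ (Fin n)) :
    sigmaSMin A k ^ 2 * ‖v‖ ^ 2 ≤ ∑ i ∈ J, ⟪v, row A i⟫_ℝ ^ 2 := by
  obtain ⟨I, hIJ, rfl⟩ := exists_subset_card_eq hk
  refine le_trans ?_ (sum_le_sum_of_subset_of_nonneg hIJ fun i _ _ => sq_nonneg _)
  rcases eq_or_ne v 0 with rfl | hv
  · simp
  have hv' : ‖v‖ ≠ 0 := norm_ne_zero_iff.mpr hv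
  have hunit := sigmaSMin_le_of_norm_eq_one A (I := I) (norm_smul_inv_norm (𝕜 := ℝ) hv)
  simp only [real_inner_smul_left, mul_pow, ← mul_sum] at hunit
  rw [Real.sqrt_mul (by positivity), Real.sqrt_sq (by positivity)] at hunit
  calc sigmaSMin A I.card ^ 2 * ‖v‖ ^ 2
      ≤ (‖v‖⁻¹ * √(∑ i ∈ I, ⟪v, row A i⟫_ℝ ^ 2)) ^ 2 * ‖v‖ ^ 2 := by
        gcongr
        · exact sigmaSMin_nonneg A _
        · exact hunit
    _ = ∑ i ∈ I, ⟪v, row A i⟫_ℝ ^ 2 := by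
        rw [mul_pow, Real.sq_sqrt (sum_nonneg fun i _ => sq_nonneg _)]
        field_simp

end Matrix

theorem qrk_noncorrupt_rows_bound_general
    {m n : ℕ} (A : Matrix (Fin m) (Fin n) ℝ)
    (q β : ℝ) (kq kβ : ℕ)
    (hm : 0 < m)
    (hrow : ∀ j, ∑ k, (A j k) ^ 2 = 1)
    (hβq : β < q)
    (hkq : (kq : ℝ) = q * m) (hkβ : (kβ : ℝ) = β * m)
    (xstar : EuclideanSpace ℝ (Fin n)) (bt b ξ : Fin m → ℝ)
    (hsol : A.mulVec (fun k => xstar k) = bt)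
    (hb : b = bt + ξ)
    (hsparse : (Finset.univ.filter fun j => ξ j ≠ 0).card ≤ kβ)
    (xk : EuclideanSpace ℝ (Fin n))
    (B : Finset (Fin m)) (hBcard : B.card = kq)
    (S : Finset (Fin m)) (hS : S = B.filter fun j => ξ j ≠ 0) :
    (B \ S).Nonempty ∧
    (1 / (((B \ S).card : ℝ))) *
        ∑ i ∈ B \ S, ‖(xk + resid A b xk i • row A i) - xstar‖ ^ 2 ≤
      (1 - sigmaSMin A (kq - kβ) ^ 2 / (q * m)) * ‖xk - xstar‖ ^ 2 := by
  have hkβq : kβ < kq := by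
    have : (0 : ℝ) < m := by exact_mod_cast hm
    exact_mod_cast (show (kβ : ℝ) < kq by rw [hkq, hkβ]; nlinarith)
  have hclean : kq - kβ ≤ (B \ S).card := hS ▸ hBcard ▸
    (Nat.sub_le_sub_left hsparse _).trans (card_sub_card_filter_le_card_sdiff_filter B _)
  have hne : (B \ S).Nonempty := card_pos.mp (by omega)
  refine ⟨hne, ?_⟩
  have hstep : ∀ i ∈ B \ S, ‖(xk + resid A b xk i • row A i) - xstar‖ ^ 2 =
      ‖xk - xstar‖ ^ 2 - ⟪xstar - xk, row A i⟫_ℝ ^ 2 := by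
    intro i hi
    obtain ⟨hiB, hiS⟩ := mem_sdiff.mp hi
    have hξ : ξ i = 0 := by simpa [hS, hiB] using hiS
    rw [resid_eq_inner_of_eq_mulVec A (xstar := xstar) (by simp [hb, ← hsol, hξ])]
    exact norm_add_inner_smul_sub_sq _ _ _ (norm_row_eq_one A (hrow i))
  have hcard : ((B \ S).card : ℝ) ≤ q * m :=
    hkq ▸ hBcard ▸ by exact_mod_cast card_le_card sdiff_subset
  have hσ := sigmaSMin_sq_mul_norm_sq_le A hclean (xstar - xk)
  rw [norm_sub_rev] at hσ
  rw [sum_congr rfl hstep]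
  calc _ ≤ ‖xk - xstar‖ ^ 2 - sigmaSMin A (kq - kβ) ^ 2 * ‖xk - xstar‖ ^ 2 / (q * m) :=
        one_div_card_mul_sum_sub_le hne hcard (by positivity) _ hσ
    _ = _ := by ring

theorem qrk_noncorrupt_rows_bound
    {m n : ℕ} (A : Matrix (Fin m) (Fin n) ℝ)
    (q β : ℝ) (kq kβ : ℕ)
    (hm : 0 < m) (hmn : n ≤ m) (hrank : A.rank = n)
    (hrow : ∀ j, ∑ k, (A j k) ^ 2 = 1)
    (hβq : β < q) (hq1 : q < 1 - β)
    (hkq : (kq : ℝ) = q * m) (hkβ : (kβ : ℝ) = β * m)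
    (xstar : EuclideanSpace ℝ (Fin n)) (bt b ξ : Fin m → ℝ)
    (hsol : A.mulVec (fun k => xstar k) = bt)
    (hb : b = bt + ξ)
    (hsparse : (Finset.univ.filter fun j => ξ j ≠ 0).card ≤ kβ)
    (xk : EuclideanSpace ℝ (Fin n)) (Q : ℝ)
    (hQ : IsQuantile (fun j => |resid A b xk j|) kq Q)
    (B : Finset (Fin m)) (hBcard : B.card = kq)
    (hBQ : ∀ j ∈ B, |resid A b xk j| ≤ Q)
    (S : Finset (Fin m)) (hS : S = B.filter fun j => ξ j ≠ 0) :
    (B \ S).Nonempty ∧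
    (1 / (((B \ S).card : ℝ))) *
        ∑ i ∈ B \ S, ‖(xk + resid A b xk i • row A i) - xstar‖ ^ 2 ≤
      (1 - sigmaSMin A (kq - kβ) ^ 2 / (q * m)) * ‖xk - xstar‖ ^ 2 :=
  qrk_noncorrupt_rows_bound_general A q β kq kβ hm hrow hβq hkq hkβ xstar bt b ξ hsol hb hsparse xk
    B hBcard S hS
end

section
/- Let 0 < β, β < q < 1 − β, with βm and qm integers, and set r := β/(1 − q − β) and p := (q − β)/q. If r < 4 and σ_max(A)² > βm·(1 − q − β)/(2√β·√(1 − q − β) − β), then α₁ < α₂, where α₁ := 1 − p·σ_{q−β,min}(A)²/(qm) + (1/q)·(β + 2σ_max(A)²·r/m) and α₂ := 1 − p·σ_{q−β,min}(A)²/(qm) + (σ_max(A)²/(qm))·(2√r + r). -/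
/-!
Cancelling the common term `1 - p σ_{q-β,min}² / (qm)`, the claim `α₁ < α₂` is
`β m < σ_max² (2√r - r)`. With `c = 1 - q - β` and `r = β / c` one has
`(2√r - r) c = 2√β √c - β`, so the threshold in the hypothesis on `σ_max²` is exactly
`β m / (2√r - r)`, and `r < 4` is what makes `2√r - r` positive.
-/

open Finset

open Real

lemma two_mul_sqrt_sub_pos {r : ℝ} (h0 : 0 < r) (h4 : r < 4) : 0 < 2 * √r - r := by
  have hlt : √r < 2 := (sqrt_lt' two_pos).mpr (by norm_num [h4])
  nlinarith [mul_self_sqrt h0.le, sqrt_pos.mpr h0]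

lemma two_mul_sqrt_div_sub_div_mul (β : ℝ) {c : ℝ} (hc : 0 < c) :
    (2 * √(β / c) - β / c) * c = 2 * √β * √c - β := by
  have hsc0 : √c ≠ 0 := (sqrt_pos.mpr hc).ne'
  rw [sqrt_div' _ hc.le]
  field_simp
  linear_combination -2 * √β * mul_self_sqrt hc.le

lemma one_div_mul_add_lt_div_mul {q m β r S : ℝ} (hq : 0 < q) (hm : 0 < m)
    (h : β * m < S * (2 * √r - r)) :
    1 / q * (β + 2 * S * r / m) < S / (q * m) * (2 * √r + r) := by
  have hdiff : S / (q * m) * (2 * √r + r) - 1 / q * (β + 2 * S * r / m)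
      = (S * (2 * √r - r) - β * m) / (q * m) := by
    field_simp
    ring
  rw [← sub_pos, hdiff]
  exact div_pos (sub_pos.mpr h) (mul_pos hq hm)

theorem qrk_decay_factor_comparison_general
    {m n : ℕ} (A : Matrix (Fin m) (Fin n) ℝ)
    (q β : ℝ) (kq kβ : ℕ)
    (hm : 0 < m)
    (hβ0 : 0 < β) (hβq : β < q) (hq1 : q < 1 - β)
    (r p : ℝ) (hr : r = β / (1 - q - β))
    (hr4 : r < 4)
    (hσ : sigmaMax A ^ 2 >
      β * m * (1 - q - β) / (2 * Real.sqrt β * Real.sqrt (1 - q - β) - β)) :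
    1 - p * sigmaSMin A (kq - kβ) ^ 2 / (q * m) +
        (1 / q) * (β + 2 * sigmaMax A ^ 2 * r / m) <
      1 - p * sigmaSMin A (kq - kβ) ^ 2 / (q * m) +
        (sigmaMax A ^ 2 / (q * m)) * (2 * Real.sqrt r + r) := by
  have hc : 0 < 1 - q - β := by linarith
  have hgap : 0 < 2 * √r - r := two_mul_sqrt_sub_pos (hr ▸ div_pos hβ0 hc) hr4
  have hthreshold : β * m * (1 - q - β) / (2 * √β * √(1 - q - β) - β)
      = β * m / (2 * √r - r) := by
    rw [← two_mul_sqrt_div_sub_div_mul β hc, ← hr, mul_div_mul_right _ _ hc.ne']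
  rw [hthreshold, gt_iff_lt, div_lt_iff₀ hgap] at hσ
  exact add_lt_add_right
    (one_div_mul_add_lt_div_mul (hβ0.trans hβq) (Nat.cast_pos.mpr hm) hσ) _

theorem qrk_decay_factor_comparison
    {m n : ℕ} (A : Matrix (Fin m) (Fin n) ℝ)
    (q β : ℝ) (kq kβ : ℕ)
    (hm : 0 < m) (hmn : n ≤ m) (hrank : A.rank = n)
    (hrow : ∀ j, ∑ k, (A j k) ^ 2 = 1)
    (hβ0 : 0 < β) (hβq : β < q) (hq1 : q < 1 - β)
    (hkq : (kq : ℝ) = q * m) (hkβ : (kβ : ℝ) = β * m)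
    (r p : ℝ) (hr : r = β / (1 - q - β)) (hp : p = (q - β) / q)
    (hr4 : r < 4)
    (hσ : sigmaMax A ^ 2 >
      β * m * (1 - q - β) / (2 * Real.sqrt β * Real.sqrt (1 - q - β) - β)) :
    1 - p * sigmaSMin A (kq - kβ) ^ 2 / (q * m) +
        (1 / q) * (β + 2 * sigmaMax A ^ 2 * r / m) <
      1 - p * sigmaSMin A (kq - kβ) ^ 2 / (q * m) +
        (sigmaMax A ^ 2 / (q * m)) * (2 * Real.sqrt r + r) :=
  qrk_decay_factor_comparison_general A q β kq kβ hm hβ0 hβq hq1 r p hr hr4 hσ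
end

section
/- Let 0 < q < 1 − β with qm and βm integers. Suppose A x* = b_t and b = b_t + η + ξ with ‖ξ‖₀ ≤ βm. Then for any x_k ∈ ℝⁿ, the q-quantile Q of the residual magnitudes satisfies Q ≤ σ_max(A)·‖x_k − x*‖/(√m·√(1 − q − β)) + √(1 − q)·‖η‖_∞/√(1 − q − β). -/
open Finset

/-!
At most `qm - 1` residuals lie strictly below `Q` and at most `βm` rows carry a sparse outlier,
so more than `(1 - q - β) m` rows `j` have `|r_j| ≥ Q` and `ξ_j = 0`. On such a row
`r_j = (A (x* - x_k))_j + η_j`, hence `|(A (x* - x_k))_j| ≥ Q - ‖η‖_∞`, and summing squares gives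
`(Q - ‖η‖_∞) √((1 - q - β) m) ≤ ‖A (x* - x_k)‖ ≤ σ_max(A) ‖x_k - x*‖`. Finally
`‖η‖_∞ ≤ √(1 - q) ‖η‖_∞ / √(1 - q - β)`.
-/

open Matrix

lemma sqrt_sum_sq_mulVec_le_sigmaMax_mul_norm {m n : ℕ} (A : Matrix (Fin m) (Fin n) ℝ)
    (y : EuclideanSpace ℝ (Fin n)) :
    √(∑ j, (A *ᵥ y.ofLp) j ^ 2) ≤ sigmaMax A * ‖y‖ := by
  have hnorm : ‖LinearMap.toContinuousLinearMap (Matrix.toEuclideanLin A) y‖ =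
      √(∑ j, (A *ᵥ y.ofLp) j ^ 2) := by
    simp [EuclideanSpace.norm_eq, Matrix.toLpLin_apply]
  exact hnorm ▸ ContinuousLinearMap.le_opNorm _ y

lemma resid_eq_mulVec_sub_add {m n : ℕ} (A : Matrix (Fin m) (Fin n) ℝ)
    {xstar : EuclideanSpace ℝ (Fin n)} {bt : Fin m → ℝ} (hsol : A *ᵥ xstar.ofLp = bt)
    (η ξ : Fin m → ℝ) (x : EuclideanSpace ℝ (Fin n)) (j : Fin m) :
    resid A (bt + η + ξ) x j = (A *ᵥ (xstar - x).ofLp) j + η j + ξ j := by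
  simp only [resid, ← hsol, WithLp.ofLp_sub, Pi.add_apply, Pi.sub_apply, mulVec, dotProduct,
    mul_comm, mul_sub, sum_sub_distrib]
  ring

lemma IsQuantile.lt_card_filter_le_and_add {m : ℕ} {f : Fin m → ℝ} {k : ℕ} {Q : ℝ}
    (hQ : IsQuantile f k Q) (p : Fin m → Prop) [DecidablePred p] :
    m < #{j | Q ≤ f j ∧ p j} + k + #{j | ¬ p j} := by
  have hcover : (univ : Finset (Fin m)) ⊆ univ.filter (fun j => Q ≤ f j ∧ p j) ∪
      univ.filter (fun j => f j < Q) ∪ univ.filter (fun j => ¬ p j) := by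
    intro j _
    simp only [mem_union, mem_filter, mem_univ, true_and]
    by_cases hj : f j < Q <;> by_cases hp : p j <;> simp_all
  calc m = #(univ : Finset (Fin m)) := (card_fin m).symm
    _ ≤ #{j | Q ≤ f j ∧ p j} + #{j | f j < Q} + #{j | ¬ p j} :=
      (card_le_card hcover).trans <|
        (card_union_le _ _).trans (by gcongr; exact card_union_le _ _)
    _ < #{j | Q ≤ f j ∧ p j} + k + #{j | ¬ p j} := by gcongr; exact hQ.2

lemma mul_sqrt_card_le_sqrt_sum_sq {ι : Type*} [Fintype ι] {T : Finset ι} {e : ι → ℝ} {t : ℝ}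
    (ht : 0 ≤ t) (hte : ∀ j ∈ T, t ≤ |e j|) :
    t * √(#T : ℝ) ≤ √(∑ j, e j ^ 2) := by
  have hsum : t ^ 2 * #T ≤ ∑ j, e j ^ 2 :=
    calc t ^ 2 * #T = ∑ _j ∈ T, t ^ 2 := by rw [sum_const, nsmul_eq_mul, mul_comm]
      _ ≤ ∑ j ∈ T, e j ^ 2 := sum_le_sum fun j hj => by
        simpa only [sq_abs] using pow_le_pow_left₀ ht (hte j hj) 2
      _ ≤ ∑ j, e j ^ 2 := sum_le_sum_of_subset_of_nonneg (subset_univ T)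
        fun j _ _ => sq_nonneg (e j)
  calc t * √(#T : ℝ) = √(t ^ 2 * #T) := by rw [Real.sqrt_mul (sq_nonneg t), Real.sqrt_sq ht]
    _ ≤ √(∑ j, e j ^ 2) := Real.sqrt_le_sqrt hsum

lemma le_div_of_forall_le_abs {ι : Type*} [Fintype ι] {T : Finset ι} {e : ι → ℝ} {t E d : ℝ}
    (hd : 0 < d) (hdT : d ≤ √(#T : ℝ)) (hE : √(∑ j, e j ^ 2) ≤ E) (hte : ∀ j ∈ T, t ≤ |e j|) :
    t ≤ E / d := by
  rw [le_div_iff₀ hd]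
  rcases le_or_gt t 0 with ht | ht
  · nlinarith [Real.sqrt_nonneg (∑ j, e j ^ 2)]
  · calc t * d ≤ t * √(#T : ℝ) := by gcongr
      _ ≤ E := (mul_sqrt_card_le_sqrt_sum_sq ht.le hte).trans hE

lemma le_sqrt_mul_div_sqrt {a b c : ℝ} (hc : 0 ≤ c) (hb : 0 < b) (hba : b ≤ a) :
    c ≤ √a * c / √b := by
  rw [le_div_iff₀ (Real.sqrt_pos.2 hb), mul_comm]
  gcongr

theorem qrk_eh_quantile_bound_general
    {m n : ℕ} (A : Matrix (Fin m) (Fin n) ℝ)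
    (q β : ℝ) (kq kβ : ℕ)
    (hq1 : q < 1 - β)
    (hkq : (kq : ℝ) = q * m) (hkβ : (kβ : ℝ) = β * m)
    (xstar : EuclideanSpace ℝ (Fin n)) (bt b η ξ : Fin m → ℝ)
    (hsol : A.mulVec (fun k => xstar k) = bt)
    (hb : b = bt + η + ξ)
    (hsparse : (Finset.univ.filter fun j => ξ j ≠ 0).card ≤ kβ)
    (xk : EuclideanSpace ℝ (Fin n)) (Q : ℝ)
    (hQ : IsQuantile (fun j => |resid A b xk j|) kq Q) :
    Q ≤ sigmaMax A * ‖xk - xstar‖ / (Real.sqrt m * Real.sqrt (1 - q - β)) +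
      Real.sqrt (1 - q) * ‖η‖ / Real.sqrt (1 - q - β) := by
  -- `β ≥ 0` is read off `kβ = β m`, which needs `m ≠ 0`; `IsQuantile` forces `kq ≥ 1`.
  have hm : 0 < m := Nat.pos_of_ne_zero <| by
    rintro rfl
    have hkq0 : kq = 0 := by simpa using hkq
    exact Nat.not_lt_zero _ (hkq0 ▸ hQ.2)
  have hβ : 0 ≤ β := nonneg_of_mul_nonneg_left (hkβ ▸ Nat.cast_nonneg kβ) (by positivity)
  have hγ : 0 < 1 - q - β := by linarith
  set T : Finset (Fin m) := {j | Q ≤ |resid A b xk j| ∧ ξ j = 0}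
  have hTcard : m * (1 - q - β) < #T := by
    have hcount := hQ.lt_card_filter_le_and_add fun j => ξ j = 0
    have hsparse' : (#{j | ξ j ≠ 0} : ℝ) ≤ kβ := by exact_mod_cast hsparse
    have hcount' : (m : ℝ) < #T + kq + #{j | ξ j ≠ 0} := by exact_mod_cast hcount
    linarith
  have hgap : ∀ j ∈ T, Q - ‖η‖ ≤ |(A *ᵥ (xstar - xk).ofLp) j| := by
    intro j hj
    obtain ⟨hQj, hξj⟩ := (mem_filter.1 hj).2
    have hrj := hb ▸ resid_eq_mulVec_sub_add A hsol η ξ xk j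
    rw [hξj, add_zero] at hrj
    have hηj : |η j| ≤ ‖η‖ := norm_le_pi_norm η j
    linarith [hrj ▸ abs_add_le ((A *ᵥ (xstar - xk).ofLp) j) (η j)]
  have hfit : Q - ‖η‖ ≤ sigmaMax A * ‖xk - xstar‖ / (√m * √(1 - q - β)) := by
    refine le_div_of_forall_le_abs (by positivity) ?_ ?_ hgap
    · rw [← Real.sqrt_mul (Nat.cast_nonneg m)]; exact Real.sqrt_le_sqrt hTcard.le
    · simpa only [norm_sub_rev] using sqrt_sum_sq_mulVec_le_sigmaMax_mul_norm A (xstar - xk)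
  linarith [le_sqrt_mul_div_sqrt (norm_nonneg η) hγ (by linarith : 1 - q - β ≤ 1 - q)]

theorem qrk_eh_quantile_bound
    {m n : ℕ} (A : Matrix (Fin m) (Fin n) ℝ)
    (q β : ℝ) (kq kβ : ℕ)
    (hm : 0 < m) (hmn : n ≤ m) (hrank : A.rank = n)
    (hrow : ∀ j, ∑ k, (A j k) ^ 2 = 1)
    (hq0 : 0 < q) (hq1 : q < 1 - β)
    (hkq : (kq : ℝ) = q * m) (hkβ : (kβ : ℝ) = β * m)
    (xstar : EuclideanSpace ℝ (Fin n)) (bt b η ξ : Fin m → ℝ)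
    (hsol : A.mulVec (fun k => xstar k) = bt)
    (hb : b = bt + η + ξ)
    (hsparse : (Finset.univ.filter fun j => ξ j ≠ 0).card ≤ kβ)
    (xk : EuclideanSpace ℝ (Fin n)) (Q : ℝ)
    (hQ : IsQuantile (fun j => |resid A b xk j|) kq Q) :
    Q ≤ sigmaMax A * ‖xk - xstar‖ / (Real.sqrt m * Real.sqrt (1 - q - β)) +
      Real.sqrt (1 - q) * ‖η‖ / Real.sqrt (1 - q - β) :=
  qrk_eh_quantile_bound_general A q β kq kβ hq1 hkq hkβ xstar bt b η ξ hsol hb hsparse xk Q hQ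
end

section
/- Let 0 < q < 1 − β with qm and βm integers. Suppose A x* = b_t and b = b_t + η + ξ with ‖ξ‖₀ ≤ βm and supp(η) ∩ supp(ξ) = ∅. For any x_k ∈ ℝⁿ, if S := {j ∈ supp(ξ) : |r_j| ≤ Q} is nonempty, then (1/|S|) Σ_{i∈S} ‖(x_k + r_i a_i) − x*‖² ≤ 2·(1 + σ_max(A)²/(m(1 − q − β)) + 2σ_max(A)/(√m·√(1 − q − β)))·‖x_k − x*‖² + 2(1 − q)·‖η‖_∞²/(1 − q − β). -/
/-!
Write the residual as `r_j = η_j + ξ_j - ⟨a_j, x_k - x*⟩`. Fewer than `qm` residuals lie below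
`Q` and at most `βm` rows are corrupted, so more than `m(1 - q - β)` uncorrupted rows have
`|r_j| ≥ Q`, and on each of them `|⟨a_j, x_k - x*⟩| ≥ Q - ‖η‖_∞`. Summing squares against
`‖A(x_k - x*)‖² ≤ σ_max² ‖x_k - x*‖²` gives `Q ≤ ‖η‖_∞ + σ_max ‖x_k - x*‖ / √(m(1 - q - β))`.
A step along a corrupted row with `|r_i| ≤ Q` moves `x_k` by at most `Q`, so every term of the
average is at most `(‖x_k - x*‖ + Q)²`, and `(a + b)² ≤ 2a² + 2b²` finishes.
-/

open Finset

open scoped Matrix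

lemma card_le_card_filter_add {ι : Type*} [Fintype ι] (ξ f : ι → ℝ) (Q : ℝ) :
    Fintype.card ι ≤ #{j | ξ j = 0 ∧ Q ≤ f j} + #{j | ξ j ≠ 0} + #{j | f j < Q} := by
  classical
  have hcover : (univ : Finset ι) ⊆
      univ.filter (fun j ↦ ξ j = 0 ∧ Q ≤ f j) ∪ univ.filter (ξ · ≠ 0) ∪
        univ.filter (f · < Q) := by
    intro j _
    simp only [mem_union, mem_filter, mem_univ, true_and]
    by_cases hξ : ξ j = 0 <;> by_cases hf : Q ≤ f j <;> simp_all
  calc Fintype.card ι = #(univ : Finset ι) := rfl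
    _ ≤ _ := card_le_card hcover
    _ ≤ _ := (card_union_le _ _).trans (by gcongr; exact card_union_le _ _)

lemma le_norm_add_of_lt_card {ι : Type*} [Fintype ι] {η g : ι → ℝ} {U : Finset ι}
    {Q M c : ℝ} (hM : 0 < M) (hU : M < #U) (hQ : ∀ j ∈ U, Q ≤ |η j - g j|)
    (hg : ∑ j, g j ^ 2 ≤ c ^ 2 * M) (hc : 0 ≤ c) : Q ≤ ‖η‖ + c := by
  by_contra! hlt
  have hlarge : ∀ j ∈ U, (Q - ‖η‖) ^ 2 ≤ g j ^ 2 := by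
    intro j hj
    have hηj : |η j| ≤ ‖η‖ := by simpa using norm_le_pi_norm η j
    have : Q - ‖η‖ ≤ |g j| := by linarith [hQ j hj, abs_sub (η j) (g j)]
    simpa using pow_le_pow_left₀ (by linarith) this 2
  have hsum : #U * (Q - ‖η‖) ^ 2 ≤ ∑ j, g j ^ 2 :=
    calc #U * (Q - ‖η‖) ^ 2 = ∑ _j ∈ U, (Q - ‖η‖) ^ 2 := by rw [sum_const, nsmul_eq_mul]
      _ ≤ ∑ j ∈ U, g j ^ 2 := sum_le_sum hlarge
      _ ≤ ∑ j, g j ^ 2 := sum_le_univ_sum_of_nonneg fun _ ↦ sq_nonneg _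
  have : c ^ 2 < (Q - ‖η‖) ^ 2 := pow_lt_pow_left₀ (by linarith) hc two_ne_zero
  nlinarith

lemma one_div_card_mul_sum_le {ι : Type*} {S : Finset ι} {f : ι → ℝ} {B : ℝ}
    (hS : S.Nonempty) (h : ∀ i ∈ S, f i ≤ B) : 1 / (#S : ℝ) * ∑ i ∈ S, f i ≤ B := by
  rw [one_div_mul_eq_div, ← expect_eq_sum_div_card]
  exact expect_le hS h

lemma norm_add_smul_sub_le {E : Type*} [SeminormedAddCommGroup E] [NormedSpace ℝ E]
    (x y a : E) (r : ℝ) : ‖x + r • a - y‖ ≤ ‖x - y‖ + |r| * ‖a‖ := by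
  rw [add_sub_right_comm, ← Real.norm_eq_abs, ← norm_smul]
  exact norm_add_le _ _

lemma sq_add_add_le {E H σ s M q β : ℝ} (hs : 0 < s) (hsM : s ^ 2 = M) (hβ : 0 ≤ β)
    (hqβ : 0 < 1 - q - β) :
    (E + σ * E / s + H) ^ 2 ≤
      2 * (1 + σ ^ 2 / M + 2 * σ / s) * E ^ 2 + 2 * (1 - q) * H ^ 2 / (1 - q - β) := by
  have hE : 2 * (E + σ * E / s) ^ 2 = 2 * (1 + σ ^ 2 / M + 2 * σ / s) * E ^ 2 := by
    rw [← hsM]; field_simp; ring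
  have hH : 2 * H ^ 2 ≤ 2 * (1 - q) * H ^ 2 / (1 - q - β) := by
    rw [le_div_iff₀ hqβ]; nlinarith [mul_nonneg (sq_nonneg H) hβ]
  linarith [add_sq_le (a := E + σ * E / s) (b := H)]

section
variable {m n : ℕ}

lemma sigmaMax_nonneg (A : Matrix (Fin m) (Fin n) ℝ) : 0 ≤ sigmaMax A :=
  norm_nonneg _

lemma sum_sq_toEuclideanLin_le (A : Matrix (Fin m) (Fin n) ℝ) (v : EuclideanSpace ℝ (Fin n)) :
    ∑ j, Matrix.toEuclideanLin A v j ^ 2 ≤ (sigmaMax A * ‖v‖) ^ 2 := by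
  rw [← EuclideanSpace.real_norm_sq_eq]
  exact pow_le_pow_left₀ (norm_nonneg _)
    ((LinearMap.toContinuousLinearMap (Matrix.toEuclideanLin A)).le_opNorm v) 2

lemma resid_eq_sub_sub_toEuclideanLin (A : Matrix (Fin m) (Fin n) ℝ) (b : Fin m → ℝ)
    (x y : EuclideanSpace ℝ (Fin n)) (j : Fin m) :
    resid A b x j = (b - A *ᵥ y.ofLp) j - Matrix.toEuclideanLin A (x - y) j := by
  simp only [resid, Pi.sub_apply, Matrix.toLpLin_apply, Matrix.mulVec, dotProduct,
    WithLp.ofLp_sub, mul_sub, Finset.sum_sub_distrib, mul_comm]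
  ring

lemma norm_add_resid_smul_row_sub_le (A : Matrix (Fin m) (Fin n) ℝ) (b : Fin m → ℝ)
    (x y : EuclideanSpace ℝ (Fin n)) {i : Fin m} (hrow : ∑ k, A i k ^ 2 = 1) :
    ‖x + resid A b x i • row A i - y‖ ≤ ‖x - y‖ + |resid A b x i| := by
  have hnorm : ‖row A i‖ = 1 :=
    (pow_eq_one_iff_of_nonneg (norm_nonneg _) two_ne_zero).mp
      ((EuclideanSpace.real_norm_sq_eq _).trans hrow)
  simpa [hnorm] using norm_add_smul_sub_le x y (row A i) (resid A b x i)

lemma quantile_le_norm_add (A : Matrix (Fin m) (Fin n) ℝ) {q β Q : ℝ} (hm : 0 < m)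
    (hqβ : 0 < 1 - q - β) {x y : EuclideanSpace ℝ (Fin n)} {b η ξ : Fin m → ℝ}
    (hb : b - A *ᵥ y.ofLp = η + ξ) (hsparse : (#{j | ξ j ≠ 0} : ℝ) ≤ β * m)
    (hQ : (#{j | |resid A b x j| < Q} : ℝ) < q * m) :
    Q ≤ ‖η‖ + sigmaMax A * ‖x - y‖ / (√m * √(1 - q - β)) := by
  have hs : 0 < √m * √(1 - q - β) := by positivity
  have hsM : (√m * √(1 - q - β)) ^ 2 = m * (1 - q - β) := by
    rw [mul_pow, Real.sq_sqrt (by positivity), Real.sq_sqrt hqβ.le]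
  refine le_norm_add_of_lt_card (U := {j | ξ j = 0 ∧ Q ≤ |resid A b x j|})
    (M := m * (1 - q - β)) (g := fun j ↦ Matrix.toEuclideanLin A (x - y) j) (by positivity)
    ?_ ?_ ?_ (div_nonneg (mul_nonneg (sigmaMax_nonneg A) (norm_nonneg _)) hs.le)
  · have hcount := card_le_card_filter_add ξ (|resid A b x ·|) Q
    rw [Fintype.card_fin] at hcount
    have := (Nat.cast_le (α := ℝ)).mpr hcount
    push_cast at this
    linarith
  · intro j hj
    rw [mem_filter] at hj
    rw [resid_eq_sub_sub_toEuclideanLin A b x y, hb, Pi.add_apply, hj.2.1, add_zero] at hj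
    exact hj.2.2
  · calc ∑ j, Matrix.toEuclideanLin A (x - y) j ^ 2 ≤ (sigmaMax A * ‖x - y‖) ^ 2 :=
          sum_sq_toEuclideanLin_le A (x - y)
      _ = _ := by rw [div_pow, hsM, div_mul_cancel₀ _ (by positivity)]

end

theorem qrk_eh_corrupt_rows_bound_general
    {m n : ℕ} (A : Matrix (Fin m) (Fin n) ℝ)
    (q β : ℝ) (kq kβ : ℕ)
    (hrow : ∀ j, ∑ k, (A j k) ^ 2 = 1)
    (hq1 : q < 1 - β)
    (hkq : (kq : ℝ) = q * m) (hkβ : (kβ : ℝ) = β * m)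
    (xstar : EuclideanSpace ℝ (Fin n)) (bt b η ξ : Fin m → ℝ)
    (hsol : A.mulVec (fun k => xstar k) = bt)
    (hb : b = bt + η + ξ)
    (hsparse : (Finset.univ.filter fun j => ξ j ≠ 0).card ≤ kβ)
    (xk : EuclideanSpace ℝ (Fin n)) (Q : ℝ)
    (hQ : IsQuantile (fun j => |resid A b xk j|) kq Q)
    (S : Finset (Fin m))
    (hS : S = Finset.univ.filter fun j => ξ j ≠ 0 ∧ |resid A b xk j| ≤ Q)
    (hSne : S.Nonempty) :
    (1 / (S.card : ℝ)) * ∑ i ∈ S, ‖(xk + resid A b xk i • row A i) - xstar‖ ^ 2 ≤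
      2 * (1 + sigmaMax A ^ 2 / (m * (1 - q - β)) +
          2 * sigmaMax A / (Real.sqrt m * Real.sqrt (1 - q - β))) * ‖xk - xstar‖ ^ 2 +
        2 * (1 - q) * ‖η‖ ^ 2 / (1 - q - β) := by
  have hresid_le : ∀ i ∈ S, |resid A b xk i| ≤ Q := fun i hi ↦ by
    rw [hS, mem_filter] at hi
    exact hi.2.2
  obtain ⟨i₀, hi₀⟩ := id hSne
  have hm : 0 < m := i₀.pos
  have hQ0 : 0 ≤ Q := (abs_nonneg _).trans (hresid_le i₀ hi₀)
  have hβ : 0 ≤ β := nonneg_of_mul_nonneg_left (hkβ ▸ kβ.cast_nonneg) (by positivity)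
  have hqβ : 0 < 1 - q - β := by linarith
  have hnoise : b - A *ᵥ xstar.ofLp = η + ξ := by rw [hb, ← hsol]; abel
  have hcorrupt : (#{j | ξ j ≠ 0} : ℝ) ≤ β * m := hkβ ▸ Nat.cast_le.mpr hsparse
  have hbelow : (#{j | |resid A b xk j| < Q} : ℝ) < q * m := hkq ▸ Nat.cast_lt.mpr hQ.2
  have hQ_le := quantile_le_norm_add A hm hqβ hnoise hcorrupt hbelow
  have hstep : ∀ i ∈ S, ‖xk + resid A b xk i • row A i - xstar‖ ^ 2 ≤ (‖xk - xstar‖ + Q) ^ 2 :=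
    fun i hi ↦ pow_le_pow_left₀ (norm_nonneg _) ((norm_add_resid_smul_row_sub_le A b xk xstar
      (hrow i)).trans (by linarith [hresid_le i hi])) 2
  calc _ ≤ (‖xk - xstar‖ + Q) ^ 2 := one_div_card_mul_sum_le hSne hstep
    _ ≤ (‖xk - xstar‖ + sigmaMax A * ‖xk - xstar‖ / (√m * √(1 - q - β)) + ‖η‖) ^ 2 :=
      pow_le_pow_left₀ (by positivity) (by linarith) 2
    _ ≤ _ := sq_add_add_le (by positivity)
      (by rw [mul_pow, Real.sq_sqrt (by positivity), Real.sq_sqrt hqβ.le]) hβ hqβ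

theorem qrk_eh_corrupt_rows_bound
    {m n : ℕ} (A : Matrix (Fin m) (Fin n) ℝ)
    (q β : ℝ) (kq kβ : ℕ)
    (hm : 0 < m) (hmn : n ≤ m) (hrank : A.rank = n)
    (hrow : ∀ j, ∑ k, (A j k) ^ 2 = 1)
    (hq0 : 0 < q) (hq1 : q < 1 - β)
    (hkq : (kq : ℝ) = q * m) (hkβ : (kβ : ℝ) = β * m)
    (xstar : EuclideanSpace ℝ (Fin n)) (bt b η ξ : Fin m → ℝ)
    (hsol : A.mulVec (fun k => xstar k) = bt)
    (hb : b = bt + η + ξ)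
    (hsparse : (Finset.univ.filter fun j => ξ j ≠ 0).card ≤ kβ)
    (hdisj : ∀ j, η j = 0 ∨ ξ j = 0)
    (xk : EuclideanSpace ℝ (Fin n)) (Q : ℝ)
    (hQ : IsQuantile (fun j => |resid A b xk j|) kq Q)
    (S : Finset (Fin m))
    (hS : S = Finset.univ.filter fun j => ξ j ≠ 0 ∧ |resid A b xk j| ≤ Q)
    (hSne : S.Nonempty) :
    (1 / (S.card : ℝ)) * ∑ i ∈ S, ‖(xk + resid A b xk i • row A i) - xstar‖ ^ 2 ≤
      2 * (1 + sigmaMax A ^ 2 / (m * (1 - q - β)) +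
          2 * sigmaMax A / (Real.sqrt m * Real.sqrt (1 - q - β))) * ‖xk - xstar‖ ^ 2 +
        2 * (1 - q) * ‖η‖ ^ 2 / (1 - q - β) :=
  qrk_eh_corrupt_rows_bound_general A q β kq kβ hrow hq1 hkq hkβ xstar bt b η ξ hsol hb hsparse xk Q
    hQ S hS hSne
end
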